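/- The real vector space of hermitian 3×3 matrices with octonion entries has dimension 27. -/

import Mathlib

noncomputable section

/-- The octonions over `R`, realised via the Cayley–Dickson construction on quaternions. -/
abbrev Oct (R : Type*) [Field R] := Quaternion R × Quaternion R

variable {R : Type*} [Field R]

/-- Octonion multiplication (Cayley–Dickson). -/
def omul (x y : Oct R) : Oct R :=
  (x.1 * y.1 - star y.2 * x.2, y.2 * x.1 + x.2 * star y.1)

/-- Octonionic conjugation. -/
def oconj (x : Oct R) : Oct R := (star x.1, -x.2)

/-- The octonion unit. -/
def oone : Oct R := ((1 : Quaternion R), 0)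

/-- 3×3 matrices with octonion entries. -/
abbrev M3 (R : Type*) [Field R] := Matrix (Fin 3) (Fin 3) (Oct R)

/-- Matrix multiplication using octonion multiplication of entries. -/
def mmul (a b : M3 R) : M3 R := fun i j => ∑ k, omul (a i k) (b k j)

/-- The Jordan product `a ∘ b = (ab + ba)/2`. -/
def jmul (a b : M3 R) : M3 R := fun i j => (2⁻¹ : R) • (mmul a b i j + mmul b a i j)

/-- The identity octonionic matrix. -/
def oI : M3 R := fun i j => if i = j then oone else 0

/-- The (octonion-valued) trace of an octonionic matrix. -/
def otr (a : M3 R) : Oct R := ∑ i, a i i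

/-- The real part of an octonion. -/
def ore (x : Oct R) : R := x.1.re

lemma omul_add_left (x y z : Oct R) : omul (x + y) z = omul x z + omul y z := by
  apply Prod.ext <;> simp [omul, add_mul, mul_add] <;> abel

lemma omul_add_right (x y z : Oct R) : omul x (y + z) = omul x y + omul x z := by
  apply Prod.ext <;> simp [omul, add_mul, mul_add, star_add] <;> abel

lemma qstar_smul (c : R) (q : Quaternion R) : star (c • q) = c • star q := by
  ext <;> simp

lemma omul_smul_left (c : R) (x y : Oct R) : omul (c • x) y = c • omul x y := by
  apply Prod.ext <;>
    simp [omul, smul_mul_assoc, mul_smul_comm, smul_sub, smul_add]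

lemma omul_smul_right (c : R) (x y : Oct R) : omul x (c • y) = c • omul x y := by
  apply Prod.ext <;>
    simp [omul, qstar_smul, smul_mul_assoc, mul_smul_comm, smul_sub, smul_add]

lemma oconj_add (x y : Oct R) : oconj (x + y) = oconj x + oconj y := by
  apply Prod.ext <;> simp [oconj] <;> abel

lemma oconj_smul (c : R) (x : Oct R) : oconj (c • x) = c • oconj x := by
  apply Prod.ext <;> simp [oconj, qstar_smul]

/-- The subspace of hermitian 3×3 octonionic matrices. -/
def herm (R : Type*) [Field R] : Submodule R (M3 R) where
  carrier := {a | ∀ i j, oconj (a i j) = a j i}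
  add_mem' := by
    intro a b ha hb i j
    simp only [Matrix.add_apply, oconj_add, ha i j, hb i j]
  zero_mem' := by
    intro i j
    simp [oconj, Prod.ext_iff]
  smul_mem' := by
    intro c a ha i j
    simp only [Matrix.smul_apply, oconj_smul, ha i j]

/-- The subspace of traceless octonionic matrices. -/
def tless (R : Type*) [Field R] : Submodule R (M3 R) where
  carrier := {a | otr a = 0}
  add_mem' := by
    intro a b ha hb
    simp only [Set.mem_setOf_eq, otr, Matrix.add_apply, Finset.sum_add_distrib] at *
    simp [ha, hb]
  zero_mem' := by simp [otr]
  smul_mem' := by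
    intro c a ha
    simp only [Set.mem_setOf_eq, otr, Matrix.smul_apply, ← Finset.smul_sum] at *
    simp [ha]

lemma jmul_add_right (P X Y : M3 R) : jmul P (X + Y) = jmul P X + jmul P Y := by
  funext i j
  simp only [jmul, mmul, Matrix.add_apply, omul_add_left, omul_add_right,
    Finset.sum_add_distrib, smul_add]
  module

lemma jmul_smul_right (c : R) (P X : M3 R) : jmul P (c • X) = c • jmul P X := by
  funext i j
  simp only [jmul, mmul, Matrix.smul_apply, omul_smul_left, omul_smul_right,
    ← Finset.smul_sum, smul_add]
  rw [smul_comm c (2⁻¹:R), smul_comm c (2⁻¹:R)]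

/-- Left Jordan multiplication `L_P` as a linear endomorphism. -/
def lmulJ (P : M3 R) : M3 R →ₗ[R] M3 R where
  toFun X := jmul P X
  map_add' := jmul_add_right P
  map_smul' c X := jmul_smul_right c P X

/-- The inner product `⟨a,b⟩ = tr(a∘b)/2` on real octonionic matrices. -/
def ip (a b : M3 ℝ) : ℝ := ore (otr (jmul a b)) / 2

/-- `diag(1,0,0)`. -/
def Pdiag : M3 ℝ := fun i j => if i = 0 ∧ j = 0 then oone else 0

lemma oconj_oconj (x : Oct ℝ) : oconj (oconj x) = x := by
  simp [oconj]

lemma oconj_smul_oone (r : ℝ) : oconj (r • (oone : Oct ℝ)) = r • oone := by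
  simp [oconj, oone, qstar_smul]

lemma herm_diag_real {a : M3 ℝ} (ha : a ∈ herm ℝ) (i : Fin 3) :
    ((a i i).1.re) • (oone : Oct ℝ) = a i i := by
  have h := ha i i
  have h1 : star (a i i).1 = (a i i).1 := congrArg Prod.fst h
  have h2 : -(a i i).2 = (a i i).2 := congrArg Prod.snd h
  apply Prod.ext
  · show ((a i i).1.re) • (1 : Quaternion ℝ) = (a i i).1
    ext
    · simp [Quaternion.re_one]
    · have := congrArg QuaternionAlgebra.imI h1
      simp at this; simp [Quaternion.imI_one]; linarith
    · have := congrArg QuaternionAlgebra.imJ h1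
      simp at this; simp [Quaternion.imJ_one]; linarith
    · have := congrArg QuaternionAlgebra.imK h1
      simp at this; simp [Quaternion.imK_one]; linarith
  · show ((a i i).1.re) • (0 : Quaternion ℝ) = (a i i).2
    have hv : (a i i).2 = 0 := by
      ext
      · have := congrArg QuaternionAlgebra.re h2; simp at this; simp [Quaternion.re_zero, Quaternion.imI_zero, Quaternion.imJ_zero, Quaternion.imK_zero]; linarith
      · have := congrArg QuaternionAlgebra.imI h2; simp at this; simp [Quaternion.re_zero, Quaternion.imI_zero, Quaternion.imJ_zero, Quaternion.imK_zero]; linarith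
      · have := congrArg QuaternionAlgebra.imJ h2; simp at this; simp [Quaternion.re_zero, Quaternion.imI_zero, Quaternion.imJ_zero, Quaternion.imK_zero]; linarith
      · have := congrArg QuaternionAlgebra.imK h2; simp at this; simp [Quaternion.re_zero, Quaternion.imI_zero, Quaternion.imJ_zero, Quaternion.imK_zero]; linarith
    simp [hv]

def hermEquiv : (herm ℝ) ≃ₗ[ℝ] (ℝ × ℝ × ℝ × Oct ℝ × Oct ℝ × Oct ℝ) where
  toFun a := ((a.1 0 0).1.re, (a.1 1 1).1.re, (a.1 2 2).1.re, a.1 0 1, a.1 0 2, a.1 1 2)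
  map_add' a b := by simp [Prod.ext_iff]
  map_smul' c a := by simp [Prod.ext_iff, Quaternion.re_smul]
  invFun p := ⟨Matrix.of ![![p.1 • oone, p.2.2.2.1, p.2.2.2.2.1],
      ![oconj p.2.2.2.1, p.2.1 • oone, p.2.2.2.2.2],
      ![oconj p.2.2.2.2.1, oconj p.2.2.2.2.2, p.2.2.1 • oone]], by
    intro i j
    fin_cases i <;> fin_cases j <;>
      simp [oconj_oconj, oconj_smul_oone]⟩
  left_inv a := by
    apply Subtype.ext
    funext i j
    fin_cases i <;> fin_cases j <;>
      simp [herm_diag_real a.2, a.2 0 1, a.2 0 2, a.2 1 2]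
  right_inv p := by
    simp [oone, Prod.ext_iff, Quaternion.re_one]

/-- `𝔥₃(𝕆)` has real dimension 27. -/
theorem herm3_octonion_finrank : Module.finrank ℝ ↥(herm ℝ) = 27 := by
  rw [hermEquiv.finrank_eq]
  have hq : Module.finrank ℝ (Quaternion ℝ) = 4 := Quaternion.finrank_eq_four
  have ho : Module.finrank ℝ (Oct ℝ) = 8 := by
    rw [Module.finrank_prod, hq]
  simp [Module.finrank_prod, ho]
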